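/- If F is a grounded family of curves with χ(F) > 2α(β+1), where α, β ≥ 0 are natural numbers, then there is a subfamily H ⊆ F such that χ(H) > α and χ(F(u,v)) > β for any two intersecting curves u, v ∈ H with u ≺ v. -/

import Mathlib

open Set

attribute [local instance] Classical.propDecidable

abbrev Pt : Type := ℝ × ℝ

/-- The closed upper halfplane. -/
def upperH : Set Pt := {p | 0 ≤ p.2}

/-- A curve: image of a continuous map from `[0,1]` to the plane. -/
def IsCurve (c : Set Pt) : Prop :=
  ∃ f : ℝ → Pt, ContinuousOn f (Set.Icc 0 1) ∧ f '' Set.Icc 0 1 = c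

/-- A grounded curve: contained in the upper halfplane, meeting the baseline in exactly
one point which is an endpoint of the curve. -/
def IsGroundedCurve (c : Set Pt) : Prop :=
  (∃ f : ℝ → Pt, ContinuousOn f (Set.Icc 0 1) ∧ f '' Set.Icc 0 1 = c ∧ (f 0).2 = 0) ∧
  c ⊆ upperH ∧ (∃! p : Pt, p ∈ c ∧ p.2 = 0)

/-- The (unique) point of a grounded curve on the baseline. -/
noncomputable def basepoint (c : Set Pt) : Pt :=
  if h : ∃ p : Pt, p ∈ c ∧ p.2 = 0 then h.choose else (0, 0)

/-- A grounded family of curves. -/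
def IsGrounded (F : Set (Set Pt)) : Prop :=
  F.Finite ∧ (∀ c ∈ F, IsGroundedCurve c) ∧
  ∀ c ∈ F, ∀ d ∈ F, c ≠ d → basepoint c ≠ basepoint d

/-- `prec u v` : the basepoint of `u` lies to the left of that of `v`. -/
def prec (u v : Set Pt) : Prop := (basepoint u).1 < (basepoint v).1

/-- `F(u,v)`: the curves of `F` between `u` and `v`. -/
def between (F : Set (Set Pt)) (u v : Set Pt) : Set (Set Pt) :=
  {c | c ∈ F ∧ prec u c ∧ prec c v}

/-- A proper coloring of the intersection graph of `F` with `m` colors. -/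
def Colorable (F : Set (Set Pt)) (m : ℕ) : Prop :=
  ∃ φ : Set Pt → ℕ, (∀ c ∈ F, φ c < m) ∧
    ∀ c ∈ F, ∀ d ∈ F, c ≠ d → (c ∩ d).Nonempty → φ c ≠ φ d

/-- Chromatic number of the intersection graph of `F`. -/
noncomputable def chi (F : Set (Set Pt)) : ℕ := sInf {m | Colorable F m}

/-- `ω(F) ≤ k`: every clique (set of pairwise intersecting members) has at most `k` members. -/
def cliqueLE (F : Set (Set Pt)) (k : ℕ) : Prop :=
  ∀ K : Finset (Set Pt), ↑K ⊆ F →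
    (∀ c ∈ K, ∀ d ∈ K, c ≠ d → (c ∩ d).Nonempty) → K.card ≤ k

/-- Points of `upperH \ W` whose path-component in `upperH \ W` is unbounded. -/
def extOf (W : Set Pt) : Set Pt :=
  {x | x ∈ upperH \ W ∧ ¬ Bornology.IsBounded (pathComponentIn (upperH \ W) x)}

/-- The exterior of a family of curves. -/
def extFam (F : Set (Set Pt)) : Set Pt := extOf (⋃₀ F)

/-- A chosen parametrization of a grounded curve by `[0,1]` starting at its basepoint. -/
noncomputable def param (c : Set Pt) : ℝ → Pt :=
  if h : ∃ f : ℝ → Pt, ContinuousOn f (Set.Icc 0 1) ∧ f '' Set.Icc 0 1 = c ∧ f 0 = basepoint c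
  then h.choose else fun _ => (0, 0)

/-- `t₀ = inf {t : c(t) ∈ A}` for the chosen parametrization of `c`. -/
noncomputable def firstTime (c A : Set Pt) : ℝ :=
  sInf {t | t ∈ Set.Icc (0:ℝ) 1 ∧ param c t ∈ A}

/-- The first point of `c` on `A`. -/
noncomputable def firstPoint (c A : Set Pt) : Pt := param c (firstTime c A)

/-- The portion of `c` from its basepoint up to and including its first point on `A`. -/
noncomputable def portionTo (c A : Set Pt) : Set Pt :=
  param c '' Set.Icc 0 (firstTime c A)

/-- The portion of `c` from its basepoint strictly before its first point on `A`. -/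
noncomputable def portionBefore (c A : Set Pt) : Set Pt :=
  param c '' Set.Ico 0 (firstTime c A)

/-- The initial portion of `c` up to `A`; all of `c` if `c` is disjoint from `A`. -/
noncomputable def initialPortion (c A : Set Pt) : Set Pt :=
  if (c ∩ A).Nonempty then portionTo c A else c

/-- A skeleton `(u,v,S)` in `F`. -/
def IsSkeleton (F : Set (Set Pt)) (u v : Set Pt) (S : Set (Set Pt)) : Prop :=
  u ∈ F ∧ v ∈ F ∧ prec u v ∧ (u ∩ v).Nonempty ∧ S ⊆ between F u v ∧
  ∀ s ∈ S, ∀ s' ∈ S, s ≠ s' → s ∩ s' = ∅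

/-- `P` is supported by the skeleton `(u,v,S)`. -/
def SupportedBy (F : Set (Set Pt)) (u v : Set Pt) (S P : Set (Set Pt)) : Prop :=
  P ⊆ between F u v ∧
  (∀ p ∈ P, p ∩ u = ∅ ∧ p ∩ v = ∅) ∧
  ∀ p ∈ P, ∃ s ∈ S, (p ∩ initialPortion s (u ∪ v)).Nonempty

/-- The data of a bracket: the families `P`, `S` and the selection `p ↦ s(p)`. -/
structure CBracket where
  P : Set (Set Pt)
  S : Set (Set Pt)
  sel : Set Pt → Set Pt

/-- `(P,S)` (with selection `sel`) is a bracket in `F`. -/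
def IsCBracket (F : Set (Set Pt)) (B : CBracket) : Prop :=
  B.P ⊆ F ∧ B.S ⊆ F ∧
  ((∀ p ∈ B.P, ∀ s ∈ B.S, prec p s) ∨ (∀ p ∈ B.P, ∀ s ∈ B.S, prec s p)) ∧
  (∀ p ∈ B.P, ∃ s ∈ B.S, (p ∩ s).Nonempty) ∧
  (∀ p ∈ B.P, B.sel p ∈ B.S ∧ firstPoint p (⋃₀ B.S) ∈ B.sel p) ∧
  ∀ s ∈ B.S, ∃ p ∈ B.P, firstPoint p (⋃₀ B.S) ∈ s

/-- `I(p)`: points of `upperH` not in any unbounded path-component of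
`upperH \ (p' ∪ s(p) ∪ B(p))`. -/
noncomputable def CBracket.regionOf (B : CBracket) (p : Set Pt) : Set Pt :=
  upperH \ extOf (portionBefore p (⋃₀ B.S) ∪ B.sel p ∪
    segment ℝ (basepoint p) (basepoint (B.sel p)))

/-- The interior `I` of a bracket. -/
noncomputable def CBracket.inter (B : CBracket) : Set Pt := ⋂ p ∈ B.P, B.regionOf p

/-- The exterior `E` of a bracket. -/
def CBracket.exter (B : CBracket) : Set Pt := extOf (⋃₀ (B.P ∪ B.S))

/-- An `n`-bracket system in `F`. -/
def IsCBracketSystem (F : Set (Set Pt)) {n : ℕ} (B : Fin n → CBracket) : Prop :=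
  (∀ i, IsCBracket F (B i)) ∧
  (∀ i, ∀ p ∈ (B i).P, ∀ j, i < j → p ⊆ (B j).inter) ∧
  ∀ i, ∀ s ∈ (B i).S, (s ∩ ⋂ j ∈ {j | i < j}, (B j).exter).Nonempty

/-- A clique in `F` (a finite set of pairwise intersecting curves of `F`). -/
def IsCliqueIn (F : Set (Set Pt)) (K : Finset (Set Pt)) : Prop :=
  ↑K ⊆ F ∧ ∀ c ∈ K, ∀ d ∈ K, c ≠ d → (c ∩ d).Nonempty

/-- `ℓ(K)`: the curve of `K` with leftmost basepoint. -/
noncomputable def lcur (K : Finset (Set Pt)) : Set Pt :=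
  if h : ∃ c ∈ K, ∀ d ∈ K, d ≠ c → prec c d then h.choose else ∅

/-- `r(K)`: the curve of `K` with second leftmost basepoint. -/
noncomputable def rcur (K : Finset (Set Pt)) : Set Pt :=
  if h : ∃ c ∈ K, c ≠ lcur K ∧ ∀ d ∈ K, d ≠ c → d ≠ lcur K → prec c d
  then h.choose else ∅

/-- `ℓ'(K)`: portion of `ℓ(K)` up to and including its first point on `r(K)`. -/
noncomputable def lport (K : Finset (Set Pt)) : Set Pt := portionTo (lcur K) (rcur K)

/-- `r'(K)`: portion of `r(K)` strictly before its first point on `ℓ'(K)`. -/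
noncomputable def rport (K : Finset (Set Pt)) : Set Pt := portionBefore (rcur K) (lport K)

/-- `s` is left for `K`. -/
def leftFor (K : Finset (Set Pt)) (s : Set Pt) : Prop :=
  (s ∩ lport K).Nonempty ∧ portionTo s (lport K) ∩ rport K = ∅

/-- `s` is right for `K`. -/
def rightFor (K : Finset (Set Pt)) (s : Set Pt) : Prop :=
  (s ∩ rport K).Nonempty ∧ portionTo s (rport K) ∩ lport K = ∅

/-- A `(k₁,…,kₙ)`-clique system in `F`. -/
def IsCliqueSystem (F : Set (Set Pt)) {n : ℕ} (ks : Fin n → ℕ)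
    (K : Fin n → Finset (Set Pt)) : Prop :=
  (∀ i, IsCliqueIn F (K i) ∧ (K i).card = ks i) ∧
  ∀ i j : Fin n, i < j →
    ↑(K j) ⊆ between F (lcur (K i)) (rcur (K i)) ∧
    (∀ s ∈ K j, (s ∩ (lport (K i) ∪ rport (K i))).Nonempty) ∧
    ((∀ s ∈ K j, leftFor (K i) s) ∨ (∀ s ∈ K j, rightFor (K i) s))

/-- `s` crosses the clique system `K`. -/
def Crosses (F : Set (Set Pt)) {n : ℕ} (K : Fin (n+1) → Finset (Set Pt)) (s : Set Pt) : Prop :=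
  s ∈ between F (lcur (K (Fin.last n))) (rcur (K (Fin.last n))) ∧
  (s ∩ extOf (⋃ i, ⋃₀ (↑(K i) : Set (Set Pt)))).Nonempty

/-!
Scan the curves from left to right by basepoint and cut the sequence greedily into consecutive
blocks, closing a block as soon as its chromatic number exceeds `β`. Every block then has
chromatic number at most `β + 1`, and every block except the last one more than `β`. Colour each
block properly with `β + 1` colours and record the parity of the block index: the `2 (β + 1)`
resulting classes cover `F`, so one of them, `H`, has chromatic number greater than `α`. Two
intersecting curves `u ≺ v` of `H` have the same colour, hence lie in different blocks, of the
same parity, hence at least two blocks apart; the block in between lies in `F(u,v)` and is not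
the last one.
-/

section Coloring

variable {A B : Set (Set Pt)} {m n : ℕ}

lemma Colorable.mono (hAB : A ⊆ B) (h : Colorable B m) : Colorable A m := by
  obtain ⟨φ, hlt, hne⟩ := h
  exact ⟨φ, fun c hc => hlt c (hAB hc), fun c hc d hd => hne c (hAB hc) d (hAB hd)⟩

lemma Colorable.mono_right (h : Colorable A m) (hmn : m ≤ n) : Colorable A n := by
  obtain ⟨φ, hlt, hne⟩ := h
  exact ⟨φ, fun c hc => (hlt c hc).trans_le hmn, hne⟩

lemma colorable_empty : Colorable ∅ 0 :=
  ⟨fun _ => 0, by simp, by simp⟩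

lemma Colorable.insert (h : Colorable A m) (a : Set Pt) : Colorable (insert a A) (m + 1) := by
  obtain ⟨φ, hlt, hne⟩ := h
  refine ⟨fun c => if c = a then m else φ c, fun c hc => ?_, fun c hc d hd hcd hcap => ?_⟩
  · dsimp only
    split_ifs with hca
    · omega
    · exact (hlt c (hc.resolve_left hca)).trans (Nat.lt_succ_self m)
  · dsimp only
    split_ifs with hca hda hda
    · exact absurd (hca.trans hda.symm) hcd
    · exact (hlt d (hd.resolve_left hda)).ne'
    · exact (hlt c (hc.resolve_left hca)).ne
    · exact hne c (hc.resolve_left hca) d (hd.resolve_left hda) hcd hcap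

lemma chi_le_of_colorable (h : Colorable A m) : chi A ≤ m :=
  Nat.sInf_le h

lemma colorable_chi (hA : A.Finite) : Colorable A (chi A) := by
  refine Nat.sInf_mem (s := {m | Colorable A m}) ?_
  induction A, hA using Set.Finite.induction_on with
  | empty => exact ⟨0, colorable_empty⟩
  | insert _ _ ih =>
    obtain ⟨m, hm⟩ := ih
    exact ⟨m + 1, hm.insert _⟩

lemma chi_empty : chi ∅ = 0 :=
  Nat.le_zero.mp (chi_le_of_colorable colorable_empty)

lemma chi_mono (hAB : A ⊆ B) (hB : B.Finite) : chi A ≤ chi B :=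
  chi_le_of_colorable ((colorable_chi hB).mono hAB)

lemma chi_insert_le (hA : A.Finite) (a : Set Pt) : chi (insert a A) ≤ chi A + 1 :=
  chi_le_of_colorable ((colorable_chi hA).insert a)

lemma exists_lt_chi_fiber (hA : A.Finite) {N : ℕ} (g : Set Pt → ℕ) (hg : ∀ c ∈ A, g c < N)
    (hchi : m * N < chi A) : ∃ i, m < chi {c ∈ A | g c = i} := by
  by_contra! hle
  have hcol (i : ℕ) : Colorable {c ∈ A | g c = i} m :=
    (colorable_chi (hA.subset fun c hc => hc.1)).mono_right (hle i)
  choose ψ hψlt hψ using hcol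
  have hA : Colorable A (m * N) := by
    refine ⟨fun c => g c + N * ψ (g c) c, fun c hc => ?_, fun c hc d hd hcd hcap heq => ?_⟩
    · have hψc := hψlt (g c) c ⟨hc, rfl⟩
      have hgc := hg c hc
      calc g c + N * ψ (g c) c < N + N * ψ (g c) c := by omega
        _ = N * (ψ (g c) c + 1) := by ring
        _ ≤ N * m := Nat.mul_le_mul_left N hψc
        _ = m * N := mul_comm N m
    · have hN : 0 < N := (Nat.zero_le _).trans_lt (hg c hc)
      obtain ⟨hqc, hrc⟩ := (Nat.div_mod_unique hN).mpr ⟨rfl, hg c hc⟩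
      obtain ⟨hqd, hrd⟩ := (Nat.div_mod_unique hN).mpr ⟨rfl, hg d hd⟩
      dsimp only at heq
      have hgcd : g c = g d := by rw [← hrc, ← hrd, heq]
      have hψcd : ψ (g c) c = ψ (g c) d := by rw [← hqc, heq, hqd, hgcd]
      exact hψ (g c) c ⟨hc, rfl⟩ d ⟨hd, hgcd.symm⟩ hcd hcap hψcd
  exact (chi_le_of_colorable hA).not_gt hchi

end Coloring

lemma IsGroundedCurve.basepoint_snd {c : Set Pt} (hc : IsGroundedCurve c) :
    (basepoint c).2 = 0 := by
  obtain ⟨-, -, p, hp, -⟩ := hc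
  have hex : ∃ q : Pt, q ∈ c ∧ q.2 = 0 := ⟨p, hp⟩
  rw [basepoint, dif_pos hex]
  exact hex.choose_spec.2

lemma IsGrounded.injOn_basepoint_fst {F : Set (Set Pt)} (hF : IsGrounded F) :
    InjOn (fun c => (basepoint c).1) F := by
  intro c hc d hd hcd
  by_contra hne
  refine hF.2.2 c hc d hd hne (Prod.ext hcd ?_)
  rw [(hF.2.1 c hc).basepoint_snd, (hF.2.1 d hd).basepoint_snd]

/-- The blocks are the fibres `{c ∈ s | idx c = k}`, and `K` is the index of the last one. -/
structure IsBlockPartition (β : ℕ) (s : Set (Set Pt)) (idx : Set Pt → ℕ) (K : ℕ) : Prop where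
  le_last : ∀ c ∈ s, idx c ≤ K
  prec_of_lt : ∀ c ∈ s, ∀ d ∈ s, idx c < idx d → prec c d
  chi_le : ∀ k, chi {c ∈ s | idx c = k} ≤ β + 1
  lt_chi : ∀ k < K, β < chi {c ∈ s | idx c = k}

namespace IsBlockPartition

variable {β K : ℕ} {s : Set (Set Pt)} {idx : Set Pt → ℕ}

lemma empty (β : ℕ) : IsBlockPartition β ∅ (fun _ => 0) 0 where
  le_last := by simp
  prec_of_lt := by simp
  chi_le := by simp [chi_empty]
  lt_chi := by simp

lemma append (hP : IsBlockPartition β s idx K) (hs : s.Finite) {a : Set Pt} (ha : a ∉ s)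
    (hlast : ∀ c ∈ s, prec c a) {L : ℕ} (hKL : K ≤ L) (hL : chi {c ∈ s | idx c = L} ≤ β)
    (hlt : ∀ k < L, β < chi {c ∈ s | idx c = k}) :
    IsBlockPartition β (insert a s) (Function.update idx a L) L := by
  have hupd : ∀ c ∈ s, Function.update idx a L c = idx c := fun c hc =>
    Function.update_of_ne (ne_of_mem_of_not_mem hc ha) _ _
  have hblock : ∀ k ≠ L,
      {c ∈ insert a s | Function.update idx a L c = k} = {c ∈ s | idx c = k} := by
    intro k hk
    ext c
    constructor
    · rintro ⟨rfl | hc, hck⟩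
      · exact absurd (by simpa using hck.symm) hk
      · exact ⟨hc, hupd c hc ▸ hck⟩
    · rintro ⟨hc, hck⟩
      exact ⟨Or.inr hc, (hupd c hc).trans hck⟩
  have hblockL : {c ∈ insert a s | Function.update idx a L c = L} =
      insert a {c ∈ s | idx c = L} := by
    ext c
    constructor
    · rintro ⟨rfl | hc, hck⟩
      · exact Or.inl rfl
      · exact Or.inr ⟨hc, hupd c hc ▸ hck⟩
    · rintro (rfl | ⟨hc, hck⟩)
      · exact ⟨Or.inl rfl, by simp⟩
      · exact ⟨Or.inr hc, (hupd c hc).trans hck⟩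
  refine ⟨?_, ?_, fun k => ?_, fun k hk => ?_⟩
  · rintro c (rfl | hc)
    · simp
    · rw [hupd c hc]; exact (hP.le_last c hc).trans hKL
  · rintro c (rfl | hc) d (rfl | hd) hcd
    · simp at hcd
    · rw [Function.update_self, hupd d hd] at hcd
      exact absurd ((hP.le_last d hd).trans hKL) hcd.not_ge
    · exact hlast c hc
    · rw [hupd c hc, hupd d hd] at hcd; exact hP.prec_of_lt c hc d hd hcd
  · by_cases hk : k = L
    · subst hk
      rw [hblockL]
      exact (chi_insert_le (hs.subset fun c hc => hc.1) a).trans (by omega)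
    · rw [hblock k hk]; exact hP.chi_le k
  · rw [hblock k hk.ne]; exact hlt k hk

lemma idx_le_of_prec (hP : IsBlockPartition β s idx K) {u v : Set Pt} (hu : u ∈ s) (hv : v ∈ s)
    (huv : prec u v) : idx u ≤ idx v :=
  not_lt.mp fun hvu => (hP.prec_of_lt v hv u hu hvu).asymm huv

lemma exists_coloring (hP : IsBlockPartition β s idx K) (hs : s.Finite) :
    ∃ col : Set Pt → ℕ, (∀ c ∈ s, col c ≤ β) ∧
      ∀ c ∈ s, ∀ d ∈ s, c ≠ d → (c ∩ d).Nonempty → idx c = idx d → col c ≠ col d := by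
  have hcol (k : ℕ) : Colorable {c ∈ s | idx c = k} (β + 1) :=
    (colorable_chi (hs.subset fun c hc => hc.1)).mono_right (hP.chi_le k)
  choose φ hφlt hφ using hcol
  refine ⟨fun c => φ (idx c) c, fun c hc => Nat.lt_succ_iff.mp (hφlt _ c ⟨hc, rfl⟩),
    fun c hc d hd hcd hcap hidx => ?_⟩
  dsimp only
  rw [← hidx]
  exact hφ _ c ⟨hc, rfl⟩ d ⟨hd, hidx.symm⟩ hcd hcap

lemma lt_chi_between (hP : IsBlockPartition β s idx K) (hs : s.Finite) {u v : Set Pt}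
    (hu : u ∈ s) (hv : v ∈ s) (huv : idx u + 1 < idx v) : β < chi (between s u v) := by
  have hblock : {c ∈ s | idx c = idx u + 1} ⊆ between s u v := fun c ⟨hc, hck⟩ =>
    ⟨hc, hP.prec_of_lt u hu c hc (by omega), hP.prec_of_lt c hc v hv (by omega)⟩
  calc β < chi {c ∈ s | idx c = idx u + 1} := hP.lt_chi _ (huv.trans_le (hP.le_last v hv))
    _ ≤ chi (between s u v) := chi_mono hblock (hs.subset fun c hc => hc.1)

end IsBlockPartition

lemma exists_isBlockPartition (β : ℕ) {s : Set (Set Pt)} (hs : s.Finite)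
    (hinj : InjOn (fun c => (basepoint c).1) s) : ∃ idx K, IsBlockPartition β s idx K := by
  lift s to Finset (Set Pt) using hs
  induction s using Finset.induction_on_max_value (fun c => (basepoint c).1) with
  | empty => exact ⟨_, _, by simpa using IsBlockPartition.empty β⟩
  | insert a s ha hmax ih =>
    rw [Finset.coe_insert] at hinj ⊢
    obtain ⟨idx, K, hP⟩ := ih (hinj.mono (subset_insert a _))
    have hlast : ∀ c ∈ (s : Set (Set Pt)), prec c a := fun c hc =>
      (hmax c hc).lt_of_ne fun h => ne_of_mem_of_not_mem hc ha
        (hinj (mem_insert_of_mem a hc) (mem_insert a _) h)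
    by_cases hK : chi {c ∈ (s : Set (Set Pt)) | idx c = K} ≤ β
    · exact ⟨_, _, hP.append s.finite_toSet ha hlast le_rfl hK hP.lt_chi⟩
    · refine ⟨_, _, hP.append s.finite_toSet ha hlast K.le_succ ?_ fun k hk => ?_⟩
      · have hempty : {c ∈ (s : Set (Set Pt)) | idx c = K + 1} = ∅ :=
          eq_empty_of_forall_notMem fun c ⟨hc, hck⟩ => by have := hP.le_last c hc; omega
        rw [hempty, chi_empty]
        exact Nat.zero_le β
      · rcases Nat.lt_succ_iff_lt_or_eq.mp hk with hk | rfl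
        · exact hP.lt_chi k hk
        · exact not_le.mp hK

/-- McGuinness' lemma. -/
theorem mcguinness_lemma (F : Set (Set Pt)) (hF : IsGrounded F) (α β : ℕ)
    (hchi : 2 * α * (β + 1) < chi F) :
    ∃ H ⊆ F, α < chi H ∧
      ∀ u ∈ H, ∀ v ∈ H, prec u v → (u ∩ v).Nonempty →
        β < chi (between F u v) := by
  obtain ⟨idx, K, hP⟩ := exists_isBlockPartition β hF.1 hF.injOn_basepoint_fst
  obtain ⟨col, hcol_le, hcol⟩ := hP.exists_coloring hF.1
  obtain ⟨i, hi⟩ := exists_lt_chi_fiber hF.1 (fun c => 2 * col c + idx c % 2)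
    (m := α) (N := 2 * (β + 1)) (fun c hc => by have := hcol_le c hc; omega) (by linarith)
  refine ⟨_, fun c hc => hc.1, hi, ?_⟩
  rintro u ⟨hu, hui⟩ v ⟨hv, hvi⟩ huv hcap
  have hle := hP.idx_le_of_prec hu hv huv
  have hne : idx u ≠ idx v := fun h =>
    hcol u hu v hv (fun h' => (h' ▸ huv).false) hcap h (by omega)
  exact hP.lt_chi_between hF.1 hu hv (by omega)
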